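/- (Theorem 4.1, case 0 < γ < 1: convergence of the one-dimensional implicit scheme.) Let γ ∈ (0,1), α ∈ (1,2], integers N ≥ 2 and N_t ≥ 1, reals τ > 0 and Δx > 0, nonnegative reals c_{i,k} (1 ≤ i ≤ N-1, 1 ≤ k ≤ N_t), and set ω_{i,k} = -Γ(2-γ)·τ^γ·κ_α·c_{i,k}/(Γ(4-α)·(Δx)^α) ≥ 0. Let R^k_i (1 ≤ i ≤ N-1, 1 ≤ k ≤ N_t) be reals and set R_max = max_{i,k} |R^k_i|. Suppose real numbers ε^k_i (0 ≤ i ≤ N, 0 ≤ k ≤ N_t) satisfy ε^0_i = 0 for all i, ε^k_0 = ε^k_N = 0 for 1 ≤ k ≤ N_t, and for all 1 ≤ i ≤ N-1 and 0 ≤ k ≤ N_t - 1: (1 - ω_{i,k+1}·g^{α,N}_{i,i})·ε^{k+1}_i - ω_{i,k+1}·Σ_{m=0, m≠i}^{N} g^{α,N}_{i,m}·ε^{k+1}_m = Σ_{s=0}^{k-1}(l_s - l_{s+1})·ε^{k-s}_i + R^{k+1}_i. Then for every 1 ≤ k ≤ N_t: max_{0≤i≤N} |ε^k_i| ≤ R_max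 / l_{k-1} ≤ (k^γ/(1-γ))·R_max. In particular, if T > 0, N_t·τ ≤ T and |R^k_i| ≤ C·τ^γ·(τ^{2-γ} + (Δx)^2) for all i, k and some constant C > 0, then max_{0≤i≤N} |ε^k_i| ≤ (C·T^γ/(1-γ))·(τ^{2-γ} + (Δx)^2) for every 0 ≤ k ≤ N_t. -/

import Mathlib

/-- The coefficients `a^ν_{j,m}` of the second-order discretization of the left
Riemann–Liouville fractional derivative. All powers are real powers. -/
noncomputable def aCoef (ν : ℝ) (j m : ℕ) : ℝ :=
  if m = j then 1
  else if m = 0 then ((j : ℝ) - 1) ^ (3 - ν) - (j : ℝ) ^ (2 - ν) * ((j : ℝ) - 3 + ν)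
  else ((j : ℝ) - (m : ℝ) + 1) ^ (3 - ν) - 2 * ((j : ℝ) - (m : ℝ)) ^ (3 - ν)
    + ((j : ℝ) - (m : ℝ) - 1) ^ (3 - ν)

/-- The coefficients `b^ν_{j,m}` of the second-order discretization of the right
Riemann–Liouville fractional derivative on a grid with `N` subintervals. -/
noncomputable def bCoef (ν : ℝ) (N j m : ℕ) : ℝ :=
  if m = j then 1
  else if m = N then (3 - ν - (N : ℝ) + (j : ℝ)) * ((N : ℝ) - (j : ℝ)) ^ (2 - ν)
    + ((N : ℝ) - (j : ℝ) - 1) ^ (3 - ν)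
  else ((m : ℝ) - (j : ℝ) + 1) ^ (3 - ν) - 2 * ((m : ℝ) - (j : ℝ)) ^ (3 - ν)
    + ((m : ℝ) - (j : ℝ) - 1) ^ (3 - ν)

/-- The coefficients `p^ν_{i,m}` (left-derivative part), for `1 ≤ i ≤ N-1`. -/
noncomputable def pCoef (ν : ℝ) (i m : ℕ) : ℝ :=
  if m < i then aCoef ν (i - 1) m - 2 * aCoef ν i m + aCoef ν (i + 1) m
  else if m = i then -2 * aCoef ν i i + aCoef ν (i + 1) i
  else if m = i + 1 then aCoef ν (i + 1) (i + 1)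
  else 0

/-- The coefficients `q^ν_{i,m}` (right-derivative part), for `1 ≤ i ≤ N-1`. -/
noncomputable def qCoef (ν : ℝ) (N i m : ℕ) : ℝ :=
  if m + 1 < i then 0
  else if m + 1 = i then bCoef ν N (i - 1) (i - 1)
  else if m = i then -2 * bCoef ν N i i + bCoef ν N (i - 1) i
  else bCoef ν N (i - 1) m - 2 * bCoef ν N i m + bCoef ν N (i + 1) m

/-- The Riesz-derivative difference coefficients `g^{ν,N}_{i,m} = p^ν_{i,m} + q^ν_{i,m}`. -/
noncomputable def gCoef (ν : ℝ) (N i m : ℕ) : ℝ := pCoef ν i m + qCoef ν N i m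

/-- The L1 coefficients `l_s = (s+1)^(1-γ) - s^(1-γ)` of the Caputo discretization. -/
noncomputable def lCoef (γ : ℝ) (s : ℕ) : ℝ := ((s : ℝ) + 1) ^ (1 - γ) - (s : ℝ) ^ (1 - γ)

/-- The Riesz constant `κ_ν = 1 / (2 cos(νπ/2))`. -/
noncomputable def kappa (ν : ℝ) : ℝ := 1 / (2 * Real.cos (ν * Real.pi / 2))

/-- The maximum of `|v i|` over `0 ≤ i ≤ N`. -/
noncomputable def maxAbs (N : ℕ) (v : ℕ → ℝ) : ℝ :=
  (Finset.range (N + 1)).sup' Finset.nonempty_range_add_one fun i => |v i|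

/-- The maximum of `|v i j|` over `0 ≤ i ≤ Nx`, `0 ≤ j ≤ Ny`. -/
noncomputable def maxAbs2 (Nx Ny : ℕ) (v : ℕ → ℕ → ℝ) : ℝ :=
  ((Finset.range (Nx + 1)) ×ˢ (Finset.range (Ny + 1))).sup'
    (Finset.nonempty_range_add_one.product Finset.nonempty_range_add_one) fun p => |v p.1 p.2|

/-!
For interior indices the Riesz coefficients are Toeplitz: `g^{ν,N}_{i,m}` is the fourth central
difference of `|x| ^ σ`, `σ = 3 - ν ∈ [1, 2]`, at `m - i`. Convexity of `x ^ σ` and of its second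
difference on `[1, ∞)` makes the off-diagonal entries nonnegative and the row sums nonpositive, so
`I - diag(ω) G` obeys a discrete maximum principle and
`‖ε^{k+1}‖∞ ≤ ∑_{s<k} (l_s - l_{s+1}) ‖ε^{k-s}‖∞ + R_max`. The L1 weights decrease from `l_0 = 1`,
so induction on `k` gives `‖ε^k‖∞ ≤ R_max / l_{k-1}`, and Bernoulli's inequality gives
`l_{k-1} ≥ (1 - γ) k^{-γ}`.
-/

open Real Set

def secondDiff {G : Type*} [AddGroupWithOne G] (f : G → ℝ) (x : G) : ℝ :=
  f (x + 1) - 2 * f x + f (x - 1)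

section secondDiff

variable {f : ℝ → ℝ} {s : Set ℝ} {x : ℝ}

lemma ConvexOn.secondDiff_nonneg (hf : ConvexOn ℝ s f) (hx₁ : x - 1 ∈ s) (hx₂ : x + 1 ∈ s) :
    0 ≤ secondDiff f x := by
  have := hf.2 hx₁ hx₂ (by norm_num : (0 : ℝ) ≤ 1 / 2) (by norm_num : (0 : ℝ) ≤ 1 / 2) (by norm_num)
  simp only [smul_eq_mul] at this
  rw [show 1 / 2 * (x - 1) + 1 / 2 * (x + 1) = x by ring] at this
  unfold secondDiff
  linarith

lemma ConcaveOn.secondDiff_nonpos (hf : ConcaveOn ℝ s f) (hx₁ : x - 1 ∈ s) (hx₂ : x + 1 ∈ s) :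
    secondDiff f x ≤ 0 := by
  have := hf.neg.secondDiff_nonneg hx₁ hx₂
  simp only [secondDiff, Pi.neg_apply] at this ⊢
  linarith

lemma Function.Even.secondDiff {G : Type*} [AddCommGroupWithOne G] {f : G → ℝ}
    (hf : f.Even) : (_root_.secondDiff f).Even := by
  intro x
  simp only [_root_.secondDiff]
  rw [show -x + 1 = -(x - 1) by abel, show -x - 1 = -(x + 1) by abel, hf, hf, hf]
  ring

lemma hasDerivAt_secondDiff {f' : ℝ → ℝ} (h₁ : HasDerivAt f (f' (x + 1)) (x + 1))
    (h₂ : HasDerivAt f (f' x) x) (h₃ : HasDerivAt f (f' (x - 1)) (x - 1)) :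
    HasDerivAt (secondDiff f) (secondDiff f' x) x :=
  ((h₁.comp_add_const x 1).sub (h₂.const_mul 2)).add (h₃.comp_sub_const x 1)

end secondDiff

lemma convexOn_rpow_of_nonpos {p : ℝ} (hp : p ≤ 0) : ConvexOn ℝ (Ioi 0) fun x : ℝ ↦ x ^ p := by
  refine convexOn_of_hasDerivWithinAt2_nonneg (convex_Ioi 0) (f' := fun x ↦ p * x ^ (p - 1))
    (f'' := fun x ↦ p * ((p - 1) * x ^ (p - 1 - 1)))
    (fun x hx ↦ (continuousAt_rpow_const x p (Or.inl (mem_Ioi.1 hx).ne')).continuousWithinAt)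
    (fun x hx ↦ ?_) (fun x hx ↦ ?_) (fun x hx ↦ ?_) <;> rw [interior_Ioi, mem_Ioi] at hx
  · exact (hasDerivAt_rpow_const (Or.inl hx.ne')).hasDerivWithinAt
  · exact ((hasDerivAt_rpow_const (Or.inl hx.ne')).const_mul p).hasDerivWithinAt
  · exact mul_nonneg_of_nonpos_of_nonpos hp
      (mul_nonpos_of_nonpos_of_nonneg (by linarith) (rpow_pos_of_pos hx _).le)

section rpow

variable {p σ x : ℝ}

lemma secondDiff_rpow_nonpos (hp₀ : 0 ≤ p) (hp₁ : p ≤ 1) (hx : 1 ≤ x) :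
    secondDiff (· ^ p) x ≤ 0 :=
  (Real.concaveOn_rpow hp₀ hp₁).secondDiff_nonpos (mem_Ici.2 (by linarith))
    (mem_Ici.2 (by linarith))

lemma secondDiff_rpow_nonneg_of_nonpos (hp : p ≤ 0) (hx : 1 < x) :
    0 ≤ secondDiff (· ^ p) x :=
  (convexOn_rpow_of_nonpos hp).secondDiff_nonneg (mem_Ioi.2 (by linarith))
    (mem_Ioi.2 (by linarith))

lemma hasDerivAt_secondDiff_rpow (hx : 1 < x) :
    HasDerivAt (secondDiff (· ^ p)) (p * secondDiff (· ^ (p - 1)) x) x := by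
  have h : ∀ y : ℝ, 0 < y → HasDerivAt (· ^ p) (p * y ^ (p - 1)) y :=
    fun y hy ↦ hasDerivAt_rpow_const (Or.inl hy.ne')
  convert hasDerivAt_secondDiff (f' := fun y ↦ p * y ^ (p - 1)) (h (x + 1) (by linarith))
    (h x (by linarith)) (h (x - 1) (by linarith)) using 1
  simp only [secondDiff]
  ring

lemma continuous_secondDiff_rpow (hp : 0 ≤ p) : Continuous (secondDiff (· ^ p)) := by
  have := continuous_rpow_const hp
  unfold secondDiff
  fun_prop

lemma antitoneOn_secondDiff_rpow (hσ : σ ∈ Icc 1 2) :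
    AntitoneOn (secondDiff (· ^ σ)) (Ici 1) := by
  obtain ⟨hσ₁, hσ₂⟩ := hσ
  refine antitoneOn_of_hasDerivWithinAt_nonpos (convex_Ici 1)
    (continuous_secondDiff_rpow (by linarith)).continuousOn
    (f' := fun x ↦ σ * secondDiff (· ^ (σ - 1)) x)
    (fun x hx ↦ ?_) (fun x hx ↦ ?_) <;> rw [interior_Ici] at hx
  · exact (hasDerivAt_secondDiff_rpow hx).hasDerivWithinAt
  · exact mul_nonpos_of_nonneg_of_nonpos (by linarith)
      (secondDiff_rpow_nonpos (by linarith) (by linarith) (le_of_lt hx))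

/-- Its second derivative is `σ (σ - 1) · secondDiff (· ^ (σ - 2)) ≥ 0`. -/
lemma convexOn_secondDiff_rpow (hσ : σ ∈ Icc 1 2) :
    ConvexOn ℝ (Ici 1) (secondDiff (· ^ σ)) := by
  obtain ⟨hσ₁, hσ₂⟩ := hσ
  refine convexOn_of_hasDerivWithinAt2_nonneg (convex_Ici 1)
    (continuous_secondDiff_rpow (by linarith)).continuousOn
    (f' := fun x ↦ σ * secondDiff (· ^ (σ - 1)) x)
    (f'' := fun x ↦ σ * ((σ - 1) * secondDiff (· ^ (σ - 1 - 1)) x))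
    (fun x hx ↦ ?_) (fun x hx ↦ ?_) (fun x hx ↦ ?_) <;> rw [interior_Ici] at hx
  · exact (hasDerivAt_secondDiff_rpow hx).hasDerivWithinAt
  · exact ((hasDerivAt_secondDiff_rpow hx).const_mul σ).hasDerivWithinAt
  · exact mul_nonneg (by linarith) (mul_nonneg (by linarith)
      (secondDiff_rpow_nonneg_of_nonpos (by linarith) hx))

/-- `9 log 3 ≤ 16 log 2` makes the derivative `3 ^ σ log 3 - 4 · 2 ^ σ log 2` nonpositive on
`[1, 2]`, and the expression vanishes at `σ = 2`. -/
lemma three_rpow_sub_four_mul_two_rpow_add_seven_nonneg (hσ : σ ∈ Icc 1 2) :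
    0 ≤ (3 : ℝ) ^ σ - 4 * 2 ^ σ + 7 := by
  have hlog : 9 * log 3 ≤ 16 * log 2 := by
    have := log_le_log (by norm_num) (show (3 : ℝ) ^ 9 ≤ 2 ^ 16 by norm_num)
    rw [log_pow, log_pow] at this
    exact_mod_cast this
  have hderiv : ∀ s, HasDerivAt (fun s : ℝ ↦ (3 : ℝ) ^ s - 4 * 2 ^ s + 7)
      (3 ^ s * log 3 - 4 * (2 ^ s * log 2)) s := fun s ↦
    (((hasStrictDerivAt_const_rpow (by norm_num) s).hasDerivAt).sub
      (((hasStrictDerivAt_const_rpow (by norm_num) s).hasDerivAt).const_mul 4)).add_const 7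
  have hanti : AntitoneOn (fun s : ℝ ↦ (3 : ℝ) ^ s - 4 * 2 ^ s + 7) (Icc 1 2) := by
    refine antitoneOn_of_hasDerivWithinAt_nonpos (convex_Icc 1 2)
      (fun s _ ↦ (hderiv s).continuousAt.continuousWithinAt)
      (fun s _ ↦ (hderiv s).hasDerivWithinAt) fun s hs ↦ ?_
    rw [interior_Icc] at hs
    have h32 : (3 : ℝ) ^ s = 2 ^ s * (3 / 2) ^ s := by
      rw [← mul_rpow (by norm_num) (by norm_num)]; norm_num
    have h94 : ((3 : ℝ) / 2) ^ s ≤ 9 / 4 := by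
      calc ((3 : ℝ) / 2) ^ s ≤ (3 / 2) ^ (2 : ℝ) :=
            rpow_le_rpow_of_exponent_le (by norm_num) hs.2.le
        _ = 9 / 4 := by norm_num
    have h2 : 0 < (2 : ℝ) ^ s := rpow_pos_of_pos (by norm_num) s
    have hl3 : 0 ≤ log 3 := log_nonneg (by norm_num)
    rw [h32]
    nlinarith [mul_le_mul_of_nonneg_right (mul_le_mul_of_nonneg_left h94 h2.le) hl3]
  have := hanti hσ (right_mem_Icc.2 (by norm_num)) hσ.2
  norm_num at this
  linarith

end rpow

noncomputable def rieszKernel (σ : ℝ) : ℝ → ℝ := secondDiff fun x ↦ |x| ^ σ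

section rieszKernel

variable {σ : ℝ}

lemma rieszKernel_even (σ : ℝ) : (rieszKernel σ).Even :=
  Function.Even.secondDiff fun x ↦ by rw [abs_neg]

lemma rieszKernel_of_one_le {x : ℝ} (hx : 1 ≤ x) :
    rieszKernel σ x = secondDiff (· ^ σ) x := by
  simp only [rieszKernel, secondDiff, abs_of_nonneg (by linarith : (0 : ℝ) ≤ x + 1),
    abs_of_nonneg (by linarith : (0 : ℝ) ≤ x), abs_of_nonneg (by linarith : (0 : ℝ) ≤ x - 1)]

lemma rieszKernel_zero (hσ : σ ≠ 0) : rieszKernel σ 0 = 2 := by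
  norm_num [rieszKernel, secondDiff, zero_rpow hσ]

lemma rieszKernel_one (hσ : σ ≠ 0) : rieszKernel σ 1 = 2 ^ σ - 2 := by
  norm_num [rieszKernel, secondDiff, zero_rpow hσ]

lemma rieszKernel_two : rieszKernel σ 2 = 3 ^ σ - 2 * 2 ^ σ + 1 := by
  norm_num [rieszKernel, secondDiff]

lemma rieszKernel_natCast_succ_le (hσ : σ ∈ Icc 1 2) (n : ℕ) :
    rieszKernel σ (n + 1) ≤ rieszKernel σ n := by
  have hσ₀ : σ ≠ 0 := by linarith [hσ.1]
  rcases Nat.eq_zero_or_pos n with rfl | hn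
  · have : (2 : ℝ) ^ σ ≤ 2 ^ (2 : ℝ) := rpow_le_rpow_of_exponent_le (by norm_num) hσ.2
    norm_num [rieszKernel_one hσ₀, rieszKernel_zero hσ₀] at this ⊢
    linarith
  · have hn : (1 : ℝ) ≤ n := by exact_mod_cast hn
    rw [rieszKernel_of_one_le (by linarith), rieszKernel_of_one_le hn]
    exact antitoneOn_secondDiff_rpow hσ hn (mem_Ici.2 (by linarith)) (by linarith)

lemma secondDiff_rieszKernel_natCast_nonneg (hσ : σ ∈ Icc 1 2) {n : ℕ} (hn : 1 ≤ n) :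
    0 ≤ secondDiff (rieszKernel σ) n := by
  have hσ₀ : σ ≠ 0 := by linarith [hσ.1]
  obtain rfl | hn := hn.eq_or_lt
  · have := three_rpow_sub_four_mul_two_rpow_add_seven_nonneg hσ
    norm_num [secondDiff, rieszKernel_two, rieszKernel_one hσ₀, rieszKernel_zero hσ₀]
    linarith
  · have hn : (2 : ℝ) ≤ n := by exact_mod_cast hn
    rw [secondDiff, rieszKernel_of_one_le (by linarith), rieszKernel_of_one_le (by linarith),
      rieszKernel_of_one_le (by linarith)]
    exact (convexOn_secondDiff_rpow hσ).secondDiff_nonneg (mem_Ici.2 (by linarith))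
      (mem_Ici.2 (by linarith))

end rieszKernel

section coefficients

variable {ν : ℝ} {N i j m : ℕ}

lemma aCoef_self (ν : ℝ) (j : ℕ) : aCoef ν j j = 1 := if_pos rfl

lemma bCoef_self (ν : ℝ) (N j : ℕ) : bCoef ν N j j = 1 := if_pos rfl

lemma aCoef_of_lt (hm : 1 ≤ m) (hmj : m < j) :
    aCoef ν j m = rieszKernel (3 - ν) (j - m) := by
  have : (1 : ℝ) ≤ j - m := by
    rw [le_sub_iff_add_le']; exact_mod_cast hmj
  rw [aCoef, if_neg hmj.ne, if_neg (by omega), rieszKernel_of_one_le this]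
  rfl

lemma bCoef_of_lt (hjm : j < m) (hmN : m < N) :
    bCoef ν N j m = rieszKernel (3 - ν) (m - j) := by
  have : (1 : ℝ) ≤ m - j := by
    rw [le_sub_iff_add_le']; exact_mod_cast hjm
  rw [bCoef, if_neg hjm.ne', if_neg hmN.ne, rieszKernel_of_one_le this]
  rfl

lemma gCoef_eq_secondDiff_rieszKernel (hν : ν ≠ 3) (hi : 1 ≤ i) (hm : 1 ≤ m) (hmN : m < N) :
    gCoef ν N i m = secondDiff (rieszKernel (3 - ν)) ((m : ℝ) - i) := by
  have h₀ : rieszKernel (3 - ν) 0 = 2 := rieszKernel_zero (sub_ne_zero.2 hν.symm)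
  rcases lt_trichotomy m i with hmi | rfl | hmi
  · rw [show (m : ℝ) - i = -((i : ℝ) - m) by ring, (rieszKernel_even _).secondDiff]
    obtain rfl | hmi : i = m + 1 ∨ m + 1 < i := by omega
    · simp (disch := omega) only [gCoef, pCoef, qCoef, if_pos, if_neg, ↓reduceIte, aCoef_self,
        bCoef_self, aCoef_of_lt, Nat.cast_add, Nat.cast_one, Nat.add_sub_cancel, secondDiff]
      ring_nf
      rw [h₀]
      ring
    · simp (disch := omega) only [gCoef, pCoef, qCoef, if_pos, aCoef_self, bCoef_self,
        aCoef_of_lt, bCoef_of_lt, Nat.cast_sub, Nat.cast_add, Nat.cast_one, secondDiff]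
      ring_nf
  · simp (disch := omega) only [gCoef, pCoef, qCoef, if_neg, ↓reduceIte, aCoef_self, bCoef_self,
      aCoef_of_lt, bCoef_of_lt, Nat.cast_sub, Nat.cast_add, Nat.cast_one, secondDiff]
    ring_nf
    rw [h₀, rieszKernel_even _ 1]
    ring
  · obtain rfl | hmi : m = i + 1 ∨ i + 1 < m := by omega
    · simp (disch := omega) only [gCoef, pCoef, qCoef, if_neg, ↓reduceIte, aCoef_self,
        bCoef_self, aCoef_of_lt, bCoef_of_lt, Nat.cast_sub, Nat.cast_add, Nat.cast_one,
        secondDiff]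
      ring_nf
      rw [h₀]
      ring
    · simp (disch := omega) only [gCoef, pCoef, qCoef, if_neg, aCoef_self, bCoef_self,
        aCoef_of_lt, bCoef_of_lt, Nat.cast_sub, Nat.cast_add, Nat.cast_one, secondDiff]
      ring_nf

lemma gCoef_nonneg (hν : ν ∈ Icc 1 2) (hi : 1 ≤ i) (hm : 1 ≤ m) (hmN : m < N) (hmi : m ≠ i) :
    0 ≤ gCoef ν N i m := by
  have hσ : 3 - ν ∈ Icc 1 2 := ⟨by linarith [hν.2], by linarith [hν.1]⟩
  rw [gCoef_eq_secondDiff_rieszKernel (by linarith [hν.2]) hi hm hmN]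
  rcases hmi.lt_or_gt with h | h
  · rw [show (m : ℝ) - i = -((i - m : ℕ) : ℝ) by push_cast [h.le]; ring,
      (rieszKernel_even _).secondDiff]
    exact secondDiff_rieszKernel_natCast_nonneg hσ (by omega)
  · rw [show (m : ℝ) - i = ((m - i : ℕ) : ℝ) by push_cast [h.le]; ring]
    exact secondDiff_rieszKernel_natCast_nonneg hσ (by omega)

lemma sum_Ioo_secondDiff (F : ℝ → ℝ) (c : ℝ) {N : ℕ} (hN : 1 ≤ N) :
    ∑ m ∈ Finset.Ioo 0 N, secondDiff F (m - c)
      = (F (N - c) - F (N - 1 - c)) - (F (1 - c) - F (-c)) := by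
  rw [← Finset.Ico_add_one_left_eq_Ioo, zero_add]
  induction N, hN using Nat.le_induction with
  | base => simp
  | succ n hn ih =>
    rw [Finset.sum_Ico_succ_top hn, ih, secondDiff]
    push_cast
    ring_nf

lemma sum_gCoef_nonpos (hν : ν ∈ Icc 1 2) (hi : 1 ≤ i) (hiN : i < N) :
    ∑ m ∈ Finset.Ioo 0 N, gCoef ν N i m ≤ 0 := by
  have hσ : 3 - ν ∈ Icc 1 2 := ⟨by linarith [hν.2], by linarith [hν.1]⟩
  have hK := rieszKernel_even (3 - ν)
  rw [Finset.sum_congr rfl fun m hm ↦ gCoef_eq_secondDiff_rieszKernel (by linarith [hν.2]) hi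
    (Finset.mem_Ioo.1 hm).1 (Finset.mem_Ioo.1 hm).2, sum_Ioo_secondDiff _ _ (by omega)]
  obtain ⟨d, rfl⟩ := Nat.exists_eq_add_of_lt hiN
  obtain ⟨j, rfl⟩ := Nat.exists_eq_add_of_le' hi
  set K := rieszKernel (3 - ν)
  calc _ = (K (d + 1) - K d) + (K (j + 1) - K j) := by
        rw [← hK j, ← hK (j + 1)]
        push_cast
        ring_nf
    _ ≤ 0 := by
        linarith [rieszKernel_natCast_succ_le hσ d, rieszKernel_natCast_succ_le hσ j]

end coefficients

section maxAbs

variable {N : ℕ} {v : ℕ → ℝ}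

lemma abs_le_maxAbs {i : ℕ} (hi : i ≤ N) : |v i| ≤ maxAbs N v :=
  Finset.le_sup' (fun j ↦ |v j|) (Finset.mem_range.2 (Nat.lt_succ_of_le hi))

lemma maxAbs_le {r : ℝ} (h : ∀ i ≤ N, |v i| ≤ r) : maxAbs N v ≤ r :=
  Finset.sup'_le _ _ fun i hi ↦ h i (Nat.le_of_lt_succ (Finset.mem_range.1 hi))

lemma maxAbs_nonneg : 0 ≤ maxAbs N v :=
  (abs_nonneg _).trans (abs_le_maxAbs (Nat.zero_le N))

lemma exists_maxAbs_eq : ∃ i ≤ N, maxAbs N v = |v i| := by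
  obtain ⟨i, hi, h⟩ := Finset.exists_mem_eq_sup' Finset.nonempty_range_add_one fun j ↦ |v j|
  exact ⟨i, Nat.le_of_lt_succ (Finset.mem_range.1 hi), h⟩

end maxAbs

/-- Discrete maximum principle for a row of `I - ω G`. -/
lemma abs_le_abs_of_sum_nonpos {ι : Type*} [DecidableEq ι] {s : Finset ι} {i : ι} (hi : i ∈ s)
    {u g : ι → ℝ} {ω : ℝ} (hω : 0 ≤ ω) (hmax : ∀ m ∈ s, |u m| ≤ |u i|)
    (hg : ∀ m ∈ s, m ≠ i → 0 ≤ g m) (hsum : ∑ m ∈ s, g m ≤ 0) :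
    |u i| ≤ |(1 - ω * g i) * u i - ω * ∑ m ∈ s.erase i, g m * u m| := by
  have hsplit := Finset.add_sum_erase s g hi
  have hoff : 0 ≤ ∑ m ∈ s.erase i, g m := Finset.sum_nonneg fun m hm ↦
    hg m (Finset.mem_erase.1 hm).2 (Finset.mem_erase.1 hm).1
  have hdiag : 0 ≤ 1 - ω * g i := by nlinarith
  have hsum_abs : |∑ m ∈ s.erase i, g m * u m| ≤ (∑ m ∈ s.erase i, g m) * |u i| := by
    rw [Finset.sum_mul]
    refine (Finset.abs_sum_le_sum_abs _ _).trans (Finset.sum_le_sum fun m hm ↦ ?_)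
    obtain ⟨hmi, hms⟩ := Finset.mem_erase.1 hm
    rw [abs_mul, abs_of_nonneg (hg m hms hmi)]
    exact mul_le_mul_of_nonneg_left (hmax m hms) (hg m hms hmi)
  calc |u i| ≤ |u i| - ω * (∑ m ∈ s, g m) * |u i| := by
        nlinarith [mul_nonneg (mul_nonneg hω (neg_nonneg.2 hsum)) (abs_nonneg (u i))]
    _ = (1 - ω * g i) * |u i| - ω * ((∑ m ∈ s.erase i, g m) * |u i|) := by
        rw [← hsplit]; ring
    _ ≤ |(1 - ω * g i) * u i| - |ω * ∑ m ∈ s.erase i, g m * u m| := by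
        rw [abs_mul, abs_of_nonneg hdiag, abs_mul, abs_of_nonneg hω]
        gcongr
    _ ≤ _ := abs_sub_abs_le_abs_sub _ _

lemma maxAbs_le_of_implicit_row {α : ℝ} (hα : α ∈ Icc 1 2) {N : ℕ} {u ω : ℕ → ℝ} {r : ℝ}
    (hr : 0 ≤ r) (hω : ∀ i, 1 ≤ i → i ≤ N - 1 → 0 ≤ ω i) (hu₀ : u 0 = 0) (huN : u N = 0)
    (hrow : ∀ i, 1 ≤ i → i ≤ N - 1 →
      |(1 - ω i * gCoef α N i i) * u i
        - ω i * ∑ m ∈ (Finset.range (N + 1)).erase i, gCoef α N i m * u m| ≤ r) :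
    maxAbs N u ≤ r := by
  obtain ⟨i, hiN, hi⟩ := exists_maxAbs_eq (N := N) (v := u)
  rw [hi]
  rcases (by omega : i = 0 ∨ i = N ∨ 1 ≤ i ∧ i ≤ N - 1) with rfl | rfl | ⟨hi₁, hiN₁⟩
  · rwa [hu₀, abs_zero]
  · rwa [huN, abs_zero]
  have hboundary : ∑ m ∈ (Finset.Ioo 0 N).erase i, gCoef α N i m * u m
      = ∑ m ∈ (Finset.range (N + 1)).erase i, gCoef α N i m * u m := by
    refine Finset.sum_subset (Finset.erase_subset_erase _ fun m hm ↦ ?_) fun m hm hm' ↦ ?_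
    · simp only [Finset.mem_Ioo, Finset.mem_range] at hm ⊢
      omega
    · simp only [Finset.mem_erase, Finset.mem_Ioo, Finset.mem_range] at hm hm'
      rcases (by omega : m = 0 ∨ m = N) with rfl | rfl
      · rw [hu₀, mul_zero]
      · rw [huN, mul_zero]
  refine (abs_le_abs_of_sum_nonpos (Finset.mem_Ioo.2 ⟨hi₁, by omega⟩) (hω i hi₁ hiN₁)
    (fun m hm ↦ hi ▸ abs_le_maxAbs (Finset.mem_Ioo.1 hm).2.le)
    (fun m hm hmi ↦ gCoef_nonneg hα hi₁ (Finset.mem_Ioo.1 hm).1 (Finset.mem_Ioo.1 hm).2 hmi)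
    (sum_gCoef_nonpos hα hi₁ (by omega))).trans ?_
  rw [hboundary]
  exact hrow i hi₁ hiN₁

section lCoef

variable {γ : ℝ}

lemma lCoef_zero (hγ : γ ≠ 1) : lCoef γ 0 = 1 := by
  simp [lCoef, zero_rpow (sub_ne_zero.2 hγ.symm)]

lemma lCoef_pos (hγ : γ < 1) (s : ℕ) : 0 < lCoef γ s :=
  sub_pos.2 (rpow_lt_rpow (Nat.cast_nonneg s) (by linarith) (by linarith))

lemma lCoef_antitone (hγ : γ ∈ Icc 0 1) : Antitone (lCoef γ) := by
  refine antitone_nat_of_succ_le fun s ↦ ?_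
  have := secondDiff_rpow_nonpos (p := 1 - γ) (x := s + 1) (by linarith [hγ.2])
    (by linarith [hγ.1]) (by simp)
  simp only [lCoef, secondDiff, add_sub_cancel_right, Nat.cast_add, Nat.cast_one] at this ⊢
  linarith

/-- Bernoulli's inequality for `(1 - 1 / x) ^ (1 - γ)` with `x = s + 1`. -/
lemma one_sub_div_rpow_le_lCoef (hγ : γ ∈ Icc 0 1) (s : ℕ) :
    (1 - γ) / ((s : ℝ) + 1) ^ γ ≤ lCoef γ s := by
  set x : ℝ := s + 1
  have hx : 1 ≤ x := by simp [x]
  have hx₀ : 0 < x := by linarith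
  have hbern : (1 + -(1 / x)) ^ (1 - γ) ≤ 1 + (1 - γ) * -(1 / x) :=
    rpow_one_add_le_one_add_mul_self (by rw [neg_le_neg_iff]; exact div_le_one_of_le₀ hx hx₀.le)
      (by linarith [hγ.2]) (by linarith [hγ.1])
  have hs : (s : ℝ) ^ (1 - γ) = x ^ (1 - γ) * (1 + -(1 / x)) ^ (1 - γ) := by
    rw [← mul_rpow hx₀.le (by rw [← sub_eq_add_neg, sub_nonneg]; exact div_le_one_of_le₀ hx hx₀.le)]
    congr 1
    field_simp
    simp [x]
  have hxγ : x ^ (1 - γ) = x / x ^ γ := by rw [rpow_sub hx₀, rpow_one]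
  have hpos : 0 < x ^ γ := rpow_pos_of_pos hx₀ γ
  calc (1 - γ) / x ^ γ = x ^ (1 - γ) - x ^ (1 - γ) * (1 + (1 - γ) * -(1 / x)) := by
        rw [hxγ]; field_simp; ring
    _ ≤ x ^ (1 - γ) - (s : ℝ) ^ (1 - γ) := by
        rw [hs]; gcongr
    _ = lCoef γ s := rfl

lemma div_lCoef_le (hγ : γ ∈ Ico 0 1) {r : ℝ} (hr : 0 ≤ r) (s : ℕ) :
    r / lCoef γ s ≤ ((s : ℝ) + 1) ^ γ / (1 - γ) * r := by
  have hpos : 0 < (1 - γ) / ((s : ℝ) + 1) ^ γ := div_pos (by linarith [hγ.2]) (by positivity)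
  calc r / lCoef γ s ≤ r / ((1 - γ) / ((s : ℝ) + 1) ^ γ) :=
        div_le_div_of_nonneg_left hr hpos (one_sub_div_rpow_le_lCoef (Ico_subset_Icc_self hγ) s)
    _ = ((s : ℝ) + 1) ^ γ / (1 - γ) * r := by rw [div_div_eq_mul_div]; ring

end lCoef

/-- The history weights `l s - l (s + 1)` sum to `1 - l n`, which makes `r / l (k - 1)` a
supersolution of the recursion. -/
lemma le_div_of_l1_recursion {l E : ℕ → ℝ} {r : ℝ} {K : ℕ} (hl : Antitone l)
    (hl_pos : ∀ n, 0 < l n) (hl₀ : l 0 = 1) (hr : 0 ≤ r)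
    (hE : ∀ n, n + 1 ≤ K → E (n + 1) ≤ ∑ s ∈ Finset.range n, (l s - l (s + 1)) * E (n - s) + r) :
    ∀ k, 1 ≤ k → k ≤ K → E k ≤ r / l (k - 1) := by
  intro k
  induction k using Nat.strong_induction_on with
  | _ k ih =>
  intro hk hkK
  obtain ⟨n, rfl⟩ := Nat.exists_eq_add_of_le' hk
  rw [Nat.add_sub_cancel]
  have hln := hl_pos n
  calc E (n + 1) ≤ ∑ s ∈ Finset.range n, (l s - l (s + 1)) * E (n - s) + r := hE n hkK
    _ ≤ ∑ s ∈ Finset.range n, (l s - l (s + 1)) * (r / l n) + r := by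
        gcongr with s hs
        · exact sub_nonneg.2 (hl s.le_succ)
        · have hs := Finset.mem_range.1 hs
          calc E (n - s) ≤ r / l (n - s - 1) := ih _ (by omega) (by omega) (by omega)
            _ ≤ r / l n := div_le_div_of_nonneg_left hr hln (hl (by omega))
    _ = r / l n := by
        rw [← Finset.sum_mul, Finset.sum_range_sub', hl₀]
        field_simp
        ring

lemma abs_sum_sub_mul_add_le {l x X : ℕ → ℝ} (hl : Antitone l) {n : ℕ}
    (hx : ∀ s < n, |x s| ≤ X s) {a r : ℝ} (ha : |a| ≤ r) :
    |∑ s ∈ Finset.range n, (l s - l (s + 1)) * x s + a|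
      ≤ ∑ s ∈ Finset.range n, (l s - l (s + 1)) * X s + r := by
  refine (abs_add_le _ _).trans (add_le_add ((Finset.abs_sum_le_sum_abs _ _).trans
    (Finset.sum_le_sum fun s hs ↦ ?_)) ha)
  have hw : 0 ≤ l s - l (s + 1) := sub_nonneg.2 (hl s.le_succ)
  rw [abs_mul, abs_of_nonneg hw]
  exact mul_le_mul_of_nonneg_left (hx s (Finset.mem_range.1 hs)) hw

lemma natCast_rpow_div_mul_le {γ τ T C X r : ℝ} {k : ℕ} (hγ : γ ∈ Ico 0 1) (hτ : 0 ≤ τ)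
    (hC : 0 ≤ C) (hX : 0 ≤ X) (hr : r ≤ C * τ ^ γ * X) (hkT : k * τ ≤ T) :
    (k : ℝ) ^ γ / (1 - γ) * r ≤ C * T ^ γ / (1 - γ) * X := by
  have hγ' : 0 < 1 - γ := by linarith [hγ.2]
  calc (k : ℝ) ^ γ / (1 - γ) * r ≤ (k : ℝ) ^ γ / (1 - γ) * (C * τ ^ γ * X) := by gcongr
    _ = C * (k * τ) ^ γ / (1 - γ) * X := by rw [mul_rpow (Nat.cast_nonneg k) hτ]; ring
    _ ≤ C * T ^ γ / (1 - γ) * X := by gcongr; exact hγ.1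

lemma kappa_neg {α : ℝ} (hα : α ∈ Ioc 1 2) : kappa α < 0 := by
  have : cos (α * π / 2) < 0 := cos_neg_of_pi_div_two_lt_of_lt
    (by nlinarith [pi_pos, hα.1]) (by nlinarith [pi_pos, hα.2])
  rw [kappa, one_div, inv_lt_zero]
  linarith

lemma neg_Gamma_mul_kappa_div_nonneg {γ α τ Δx c : ℝ} (hγ : γ < 2) (hα : α ∈ Ioc 1 2)
    (hτ : 0 ≤ τ) (hΔx : 0 ≤ Δx) (hc : 0 ≤ c) :
    0 ≤ -(Gamma (2 - γ) * τ ^ γ * kappa α * c) / (Gamma (4 - α) * Δx ^ α) := by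
  have hΓ₁ := Gamma_pos_of_pos (by linarith : 0 < 2 - γ)
  have hΓ₂ := Gamma_pos_of_pos (by linarith [hα.2] : 0 < 4 - α)
  refine div_nonneg (neg_nonneg.2 (mul_nonpos_of_nonpos_of_nonneg ?_ hc)) (by positivity)
  exact mul_nonpos_of_nonneg_of_nonpos (by positivity) (kappa_neg hα).le

theorem implicit_1d_convergence_general (γ α : ℝ) (hγ : γ ∈ Set.Ioo (0:ℝ) 1)
    (hα : α ∈ Set.Ioc (1:ℝ) 2)
    (N Nt : ℕ)
    (τ Δx : ℝ) (hτ : 0 < τ) (hΔx : 0 < Δx)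
    (c : ℕ → ℕ → ℝ)
    (hc : ∀ i k : ℕ, 1 ≤ i → i ≤ N - 1 → 1 ≤ k → k ≤ Nt → 0 ≤ c i k)
    (ω : ℕ → ℕ → ℝ)
    (hω : ∀ i k : ℕ, 1 ≤ i → i ≤ N - 1 → 1 ≤ k → k ≤ Nt →
      ω i k = -(Real.Gamma (2 - γ) * τ ^ γ * kappa α * c i k) / (Real.Gamma (4 - α) * Δx ^ α))
    (R : ℕ → ℕ → ℝ) (Rmax : ℝ)
    (hRmax : IsGreatest
      {x : ℝ | ∃ i k : ℕ, 1 ≤ i ∧ i ≤ N - 1 ∧ 1 ≤ k ∧ k ≤ Nt ∧ x = |R k i|} Rmax)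
    (ε : ℕ → ℕ → ℝ)
    (hinit : ∀ i : ℕ, i ≤ N → ε 0 i = 0)
    (hbc : ∀ k : ℕ, 1 ≤ k → k ≤ Nt → ε k 0 = 0 ∧ ε k N = 0)
    (hscheme : ∀ i k : ℕ, 1 ≤ i → i ≤ N - 1 → k + 1 ≤ Nt →
      (1 - ω i (k + 1) * gCoef α N i i) * ε (k + 1) i
        - ω i (k + 1) * ∑ m ∈ (Finset.range (N + 1)).erase i, gCoef α N i m * ε (k + 1) m
      = (∑ s ∈ Finset.range k, (lCoef γ s - lCoef γ (s + 1)) * ε (k - s) i)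
        + R (k + 1) i) :
    (∀ k : ℕ, 1 ≤ k → k ≤ Nt →
      maxAbs N (ε k) ≤ Rmax / lCoef γ (k - 1) ∧
      Rmax / lCoef γ (k - 1) ≤ (k : ℝ) ^ γ / (1 - γ) * Rmax) ∧
    (∀ T C : ℝ, 0 < T → (Nt : ℝ) * τ ≤ T → 0 < C →
      (∀ i k : ℕ, 1 ≤ i → i ≤ N - 1 → 1 ≤ k → k ≤ Nt →
        |R k i| ≤ C * τ ^ γ * (τ ^ (2 - γ) + Δx ^ 2)) →
      ∀ k : ℕ, k ≤ Nt →
        maxAbs N (ε k) ≤ C * T ^ γ / (1 - γ) * (τ ^ (2 - γ) + Δx ^ 2)) := by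
  obtain ⟨hγ₀, hγ₁⟩ := hγ
  obtain ⟨⟨i₀, k₀, hi₀, hi₀N, hk₀, hk₀N, hRmax_eq⟩, hRmax_ub⟩ := hRmax
  have hRmax₀ : 0 ≤ Rmax := hRmax_eq ▸ abs_nonneg _
  have hl := lCoef_antitone ⟨hγ₀.le, hγ₁.le⟩
  have hstep : ∀ n, n + 1 ≤ Nt → maxAbs N (ε (n + 1))
      ≤ ∑ s ∈ Finset.range n, (lCoef γ s - lCoef γ (s + 1)) * maxAbs N (ε (n - s)) + Rmax := by
    intro n hn
    refine maxAbs_le_of_implicit_row (ω := fun i ↦ ω i (n + 1)) (Ioc_subset_Icc_self hα) ?_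
      (fun i hi hiN ↦ ?_) (hbc _ (by omega) hn).1 (hbc _ (by omega) hn).2 (fun i hi hiN ↦ ?_)
    · exact add_nonneg (Finset.sum_nonneg fun s _ ↦
        mul_nonneg (sub_nonneg.2 (hl s.le_succ)) maxAbs_nonneg) hRmax₀
    · rw [hω i _ hi hiN (by omega) hn]
      exact neg_Gamma_mul_kappa_div_nonneg (by linarith) hα hτ.le hΔx.le
        (hc i _ hi hiN (by omega) hn)
    · rw [hscheme i n hi hiN hn]
      exact abs_sum_sub_mul_add_le hl (fun s _ ↦ abs_le_maxAbs (by omega))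
        (hRmax_ub ⟨i, n + 1, hi, hiN, by omega, hn, rfl⟩)
  have hbound := le_div_of_l1_recursion (E := fun k ↦ maxAbs N (ε k)) hl (lCoef_pos hγ₁)
    (lCoef_zero hγ₁.ne) hRmax₀ hstep
  have hgrowth : ∀ k, 1 ≤ k → Rmax / lCoef γ (k - 1) ≤ (k : ℝ) ^ γ / (1 - γ) * Rmax :=
    fun k hk ↦ by simpa [Nat.cast_pred hk] using div_lCoef_le ⟨hγ₀.le, hγ₁⟩ hRmax₀ (k - 1)
  refine ⟨fun k hk hkN ↦ ⟨hbound k hk hkN, hgrowth k hk⟩, fun T C hT hNtT hC hRC k hk ↦ ?_⟩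
  rcases Nat.eq_zero_or_pos k with rfl | hk₁
  · exact maxAbs_le fun i hi ↦ by
      rw [hinit i hi, abs_zero]
      exact mul_nonneg (div_nonneg (by positivity) (by linarith)) (by positivity)
  exact ((hbound k hk₁ hk).trans (hgrowth k hk₁)).trans
    (natCast_rpow_div_mul_le ⟨hγ₀.le, hγ₁⟩ hτ.le hC.le (by positivity)
      (hRmax_eq ▸ hRC i₀ k₀ hi₀ hi₀N hk₀ hk₀N)
      ((mul_le_mul_of_nonneg_right (by exact_mod_cast hk) hτ.le).trans hNtT))

/-- Theorem 4.1 (case `0 < γ < 1`): convergence of the one-dimensional implicit scheme.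
Here `ε k i` is the error `u(x_i,t_k) - u^k_i` and `R k i` the local truncation error
`R^k_i`, with `Rmax` the maximum of `|R^k_i|`. -/
theorem implicit_1d_convergence (γ α : ℝ) (hγ : γ ∈ Set.Ioo (0:ℝ) 1)
    (hα : α ∈ Set.Ioc (1:ℝ) 2)
    (N Nt : ℕ) (hN : 2 ≤ N) (hNt : 1 ≤ Nt)
    (τ Δx : ℝ) (hτ : 0 < τ) (hΔx : 0 < Δx)
    (c : ℕ → ℕ → ℝ)
    (hc : ∀ i k : ℕ, 1 ≤ i → i ≤ N - 1 → 1 ≤ k → k ≤ Nt → 0 ≤ c i k)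
    (ω : ℕ → ℕ → ℝ)
    (hω : ∀ i k : ℕ, 1 ≤ i → i ≤ N - 1 → 1 ≤ k → k ≤ Nt →
      ω i k = -(Real.Gamma (2 - γ) * τ ^ γ * kappa α * c i k) / (Real.Gamma (4 - α) * Δx ^ α))
    (R : ℕ → ℕ → ℝ) (Rmax : ℝ)
    (hRmax : IsGreatest
      {x : ℝ | ∃ i k : ℕ, 1 ≤ i ∧ i ≤ N - 1 ∧ 1 ≤ k ∧ k ≤ Nt ∧ x = |R k i|} Rmax)
    (ε : ℕ → ℕ → ℝ)
    (hinit : ∀ i : ℕ, i ≤ N → ε 0 i = 0)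
    (hbc : ∀ k : ℕ, 1 ≤ k → k ≤ Nt → ε k 0 = 0 ∧ ε k N = 0)
    (hscheme : ∀ i k : ℕ, 1 ≤ i → i ≤ N - 1 → k + 1 ≤ Nt →
      (1 - ω i (k + 1) * gCoef α N i i) * ε (k + 1) i
        - ω i (k + 1) * ∑ m ∈ (Finset.range (N + 1)).erase i, gCoef α N i m * ε (k + 1) m
      = (∑ s ∈ Finset.range k, (lCoef γ s - lCoef γ (s + 1)) * ε (k - s) i)
        + R (k + 1) i) :
    (∀ k : ℕ, 1 ≤ k → k ≤ Nt →
      maxAbs N (ε k) ≤ Rmax / lCoef γ (k - 1) ∧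
      Rmax / lCoef γ (k - 1) ≤ (k : ℝ) ^ γ / (1 - γ) * Rmax) ∧
    (∀ T C : ℝ, 0 < T → (Nt : ℝ) * τ ≤ T → 0 < C →
      (∀ i k : ℕ, 1 ≤ i → i ≤ N - 1 → 1 ≤ k → k ≤ Nt →
        |R k i| ≤ C * τ ^ γ * (τ ^ (2 - γ) + Δx ^ 2)) →
      ∀ k : ℕ, k ≤ Nt →
        maxAbs N (ε k) ≤ C * T ^ γ / (1 - γ) * (τ ^ (2 - γ) + Δx ^ 2)) :=
  implicit_1d_convergence_general γ α hγ hα N Nt τ Δx hτ hΔx c hc ω hω R Rmax hRmax ε hinit hbc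
    hscheme
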